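/- arXiv:2002.06315 — 8 statements merged into one kernel-verified Lean document; each statement's English description precedes it below -/
import Mathlib

section
/- If the Bregman function h satisfies σ/2·‖x - y‖² ≤ D_h(x, y) ≤ L/2·‖x - y‖² for all x, y (with 0 < σ ≤ L), then D_h satisfies the triangle scaling property with constant G = L/σ: for all λ, λ₁, λ₂ and θ ∈ [0,1], D_h((1-θ)λ + θλ₁, (1-θ)λ + θλ₂) ≤ (L/σ)·θ²·D_h(λ₁, λ₂). -/
open RealInnerProductSpace

section QuadraticBounds

variable {E : Type*} [SeminormedAddCommGroup E] [NormedSpace ℝ E]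

theorem sub_convexCombo_eq_smul_sub (a b c : E) (θ : ℝ) :
    ((1 - θ) • a + θ • b) - ((1 - θ) • a + θ • c) = θ • (b - c) := by
  rw [add_sub_add_left_eq_sub, smul_sub]

theorem triangle_scaling_of_quadratic_bounds (D : E → E → ℝ) {σ L : ℝ} (hσ : 0 < σ)
    (hσL : σ ≤ L) (hlower : ∀ x y, σ / 2 * ‖x - y‖ ^ 2 ≤ D x y)
    (hupper : ∀ x y, D x y ≤ L / 2 * ‖x - y‖ ^ 2) (lam lam₁ lam₂ : E) {θ : ℝ} (hθ : 0 ≤ θ) :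
    D ((1 - θ) • lam + θ • lam₁) ((1 - θ) • lam + θ • lam₂) ≤ L / σ * θ ^ 2 * D lam₁ lam₂ := by
  have hL : 0 < L := hσ.trans_le hσL
  calc D ((1 - θ) • lam + θ • lam₁) ((1 - θ) • lam + θ • lam₂)
      ≤ L / 2 * ‖θ • (lam₁ - lam₂)‖ ^ 2 := by
        rw [← sub_convexCombo_eq_smul_sub]; exact hupper _ _
    _ = L / σ * θ ^ 2 * (σ / 2 * ‖lam₁ - lam₂‖ ^ 2) := by
        rw [norm_smul, Real.norm_of_nonneg hθ]; field_simp
    _ ≤ L / σ * θ ^ 2 * D lam₁ lam₂ := by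
        gcongr; exact hlower _ _

end QuadraticBounds

theorem triangle_scaling_of_smooth_strongly_convex_general {n : ℕ}
    (D : EuclideanSpace ℝ (Fin n) → EuclideanSpace ℝ (Fin n) → ℝ)
    (σ L : ℝ) (hσ : 0 < σ) (hσL : σ ≤ L)
    (hlower : ∀ x y, σ / 2 * ‖x - y‖ ^ 2 ≤ D x y)
    (hupper : ∀ x y, D x y ≤ L / 2 * ‖x - y‖ ^ 2) :
    ∀ (lam lam₁ lam₂ : EuclideanSpace ℝ (Fin n)) (θ : ℝ), 0 ≤ θ → θ ≤ 1 →
      D ((1 - θ) • lam + θ • lam₁) ((1 - θ) • lam + θ • lam₂) ≤ L / σ * θ ^ 2 * D lam₁ lam₂ :=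
  fun lam lam₁ lam₂ _ hθ _ =>
    triangle_scaling_of_quadratic_bounds D hσ hσL hlower hupper lam lam₁ lam₂ hθ

theorem triangle_scaling_of_smooth_strongly_convex {n : ℕ}
    (h : EuclideanSpace ℝ (Fin n) → ℝ)
    (h' : EuclideanSpace ℝ (Fin n) → EuclideanSpace ℝ (Fin n))
    (hdiff : ∀ x, HasGradientAt h (h' x) x)
    (D : EuclideanSpace ℝ (Fin n) → EuclideanSpace ℝ (Fin n) → ℝ)
    (hD : ∀ x y, D x y = h x - h y - ⟪h' y, x - y⟫)
    (σ L : ℝ) (hσ : 0 < σ) (hσL : σ ≤ L)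
    (hlower : ∀ x y, σ / 2 * ‖x - y‖ ^ 2 ≤ D x y)
    (hupper : ∀ x y, D x y ≤ L / 2 * ‖x - y‖ ^ 2) :
    ∀ (lam lam₁ lam₂ : EuclideanSpace ℝ (Fin n)) (θ : ℝ), 0 ≤ θ → θ ≤ 1 →
      D ((1 - θ) • lam + θ • lam₁) ((1 - θ) • lam + θ • lam₂) ≤ L / σ * θ ^ 2 * D lam₁ lam₂ :=
  triangle_scaling_of_smooth_strongly_convex_general D σ L hσ hσL hlower hupper
end

section
/- Let d : Λ → ℝ be concave and differentiable on convex Λ, with maximizer λ*. Let the Bregman proximal point sequence be defined by λ_{k+1} = argmax over Λ of {d(λ) - (1/η_k)·D_h(λ, λ_k)} with η_k > 0. Then for all λ ∈ Λ and all k: η_k·(d(λ) - d(λ_{k+1})) ≤ D_h(λ, λ_k) - D_h(λ, λ_{k+1}) - D_h(λ_{k+1}, λ_k). -/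
/-!
The tangent-plane bound for the concave `d` at `λ_{k+1}` gives
`d λ - d λ_{k+1} ≤ ⟪∇d λ_{k+1}, λ - λ_{k+1}⟫`; the optimality condition bounds `η_k` times the right
side by `⟪∇h λ_{k+1} - ∇h λ_k, λ - λ_{k+1}⟫`, and the three-point identity rewrites this inner
product as `D(λ, λ_k) - D(λ, λ_{k+1}) - D(λ_{k+1}, λ_k)`.
-/

open RealInnerProductSpace

theorem ConcaveOn.sub_le_of_hasFDerivAt {E : Type*} [NormedAddCommGroup E] [NormedSpace ℝ E]
    {s : Set E} {f : E → ℝ} {f' : StrongDual ℝ E} {x y : E}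
    (hf : ConcaveOn ℝ s f) (hf' : HasFDerivAt f f' x) (hx : x ∈ s) (hy : y ∈ s) :
    f y - f x ≤ f' (y - x) := by
  set g : ℝ →ᵃ[ℝ] E := AffineMap.lineMap x y
  have hline : ConcaveOn ℝ (g ⁻¹' s) (f ∘ g) := hf.comp_affineMap g
  have hderiv : HasDerivAt (f ∘ g) (f' (y - x)) 0 :=
    HasFDerivAt.comp_hasDerivAt (0 : ℝ) (by simpa [g] using hf') AffineMap.hasDerivAt_lineMap
  simpa [g, slope_def_field] using
    hline.slope_le_of_hasDerivAt (by simpa [g] using hx) (by simpa [g] using hy) zero_lt_one hderiv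

theorem ConcaveOn.sub_le_inner_of_hasGradientAt {E : Type*} [NormedAddCommGroup E]
    [InnerProductSpace ℝ E] [CompleteSpace E] {s : Set E} {f : E → ℝ} {f' x y : E}
    (hf : ConcaveOn ℝ s f) (hf' : HasGradientAt f f' x) (hx : x ∈ s) (hy : y ∈ s) :
    f y - f x ≤ ⟪f', y - x⟫ :=
  hf.sub_le_of_hasFDerivAt hf'.hasFDerivAt hx hy

section Bregman

variable {E : Type*} [NormedAddCommGroup E] [InnerProductSpace ℝ E]

def bregmanDiv (h : E → ℝ) (h' : E → E) (x y : E) : ℝ :=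
  h x - h y - ⟪h' y, x - y⟫

theorem bregmanDiv_three_point (h : E → ℝ) (h' : E → E) (x y z : E) :
    bregmanDiv h h' z x - bregmanDiv h h' z y - bregmanDiv h h' y x = ⟪h' y - h' x, z - y⟫ := by
  have hsplit : z - x = (z - y) + (y - x) := by abel
  simp only [bregmanDiv, hsplit, inner_add_right, inner_sub_left]
  ring

end Bregman

theorem bregman_ppm_one_step_general {n : ℕ}
    (Λ : Set (EuclideanSpace ℝ (Fin n)))
    (h : EuclideanSpace ℝ (Fin n) → ℝ)
    (h' : EuclideanSpace ℝ (Fin n) → EuclideanSpace ℝ (Fin n))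
    (D : EuclideanSpace ℝ (Fin n) → EuclideanSpace ℝ (Fin n) → ℝ)
    (hD : ∀ x y, D x y = h x - h y - ⟪h' y, x - y⟫)
    (d : EuclideanSpace ℝ (Fin n) → ℝ)
    (d' : EuclideanSpace ℝ (Fin n) → EuclideanSpace ℝ (Fin n))
    (hdconc : ConcaveOn ℝ Λ d)
    (hddiff : ∀ x, HasGradientAt d (d' x) x)
    (η : ℕ → ℝ) (hη : ∀ k, 0 < η k)
    (lam : ℕ → EuclideanSpace ℝ (Fin n)) (hmem : ∀ k, lam k ∈ Λ)
    (hopt : ∀ k, ∀ μ ∈ Λ,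
      ⟪d' (lam (k + 1)) - (1 / η k) • (h' (lam (k + 1)) - h' (lam k)), μ - lam (k + 1)⟫ ≤ 0) :
    ∀ μ ∈ Λ, ∀ k,
      η k * (d μ - d (lam (k + 1))) ≤ D μ (lam k) - D μ (lam (k + 1)) - D (lam (k + 1)) (lam k) := by
  intro μ hμ k
  obtain rfl : D = bregmanDiv h h' := funext₂ hD
  rw [bregmanDiv_three_point]
  have hgrad : d μ - d (lam (k + 1)) ≤ ⟪d' (lam (k + 1)), μ - lam (k + 1)⟫ :=
    hdconc.sub_le_inner_of_hasGradientAt (hddiff _) (hmem (k + 1)) hμ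
  have hstep := hopt k μ hμ
  rw [inner_sub_left, real_inner_smul_left, sub_nonpos, one_div_mul_eq_div,
    le_div_iff₀' (hη k)] at hstep
  calc η k * (d μ - d (lam (k + 1)))
      ≤ η k * ⟪d' (lam (k + 1)), μ - lam (k + 1)⟫ := by gcongr; exact (hη k).le
    _ ≤ ⟪h' (lam (k + 1)) - h' (lam k), μ - lam (k + 1)⟫ := hstep

theorem bregman_ppm_one_step {n : ℕ}
    (Λ : Set (EuclideanSpace ℝ (Fin n))) (hΛ : Convex ℝ Λ)
    (h : EuclideanSpace ℝ (Fin n) → ℝ)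
    (h' : EuclideanSpace ℝ (Fin n) → EuclideanSpace ℝ (Fin n))
    (hstrict : StrictConvexOn ℝ Λ h)
    (hdiff : ∀ x, HasGradientAt h (h' x) x)
    (D : EuclideanSpace ℝ (Fin n) → EuclideanSpace ℝ (Fin n) → ℝ)
    (hD : ∀ x y, D x y = h x - h y - ⟪h' y, x - y⟫)
    (d : EuclideanSpace ℝ (Fin n) → ℝ)
    (d' : EuclideanSpace ℝ (Fin n) → EuclideanSpace ℝ (Fin n))
    (hdconc : ConcaveOn ℝ Λ d)
    (hddiff : ∀ x, HasGradientAt d (d' x) x)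
    (η : ℕ → ℝ) (hη : ∀ k, 0 < η k)
    (lam : ℕ → EuclideanSpace ℝ (Fin n)) (hmem : ∀ k, lam k ∈ Λ)
    (hopt : ∀ k, ∀ μ ∈ Λ,
      ⟪d' (lam (k + 1)) - (1 / η k) • (h' (lam (k + 1)) - h' (lam k)), μ - lam (k + 1)⟫ ≤ 0) :
    ∀ μ ∈ Λ, ∀ k,
      η k * (d μ - d (lam (k + 1))) ≤ D μ (lam k) - D μ (lam (k + 1)) - D (lam (k + 1)) (lam k) :=
  bregman_ppm_one_step_general Λ h h' D hD d d' hdconc hddiff η hη lam hmem hopt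
end

section
/- Under the one-step inequality η_k·(d(λ*) - d(λ_{k+1})) ≤ D_h(λ*, λ_k) - D_h(λ*, λ_{k+1}) for all k, if ∑_{k=0}^∞ η_k = ∞ and d(λ_k) is non-decreasing and bounded above by d(λ*), then d(λ_k) → d(λ*) as k → ∞. -/
open Filter

theorem bregman_ppm_convergence {n : ℕ}
    (Λ : Set (EuclideanSpace ℝ (Fin n)))
    (d : EuclideanSpace ℝ (Fin n) → ℝ)
    (D : EuclideanSpace ℝ (Fin n) → EuclideanSpace ℝ (Fin n) → ℝ)
    (hDnn : ∀ x y, 0 ≤ D x y)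
    (η : ℕ → ℝ) (hη : ∀ k, 0 < η k)
    (hdiv : Tendsto (fun T => ∑ k ∈ Finset.range T, η k) atTop atTop)
    (lam : ℕ → EuclideanSpace ℝ (Fin n)) (hmem : ∀ k, lam k ∈ Λ)
    (lamStar : EuclideanSpace ℝ (Fin n)) (hstar : lamStar ∈ Λ)
    (hstep : ∀ k,
      η k * (d lamStar - d (lam (k + 1))) ≤ D lamStar (lam k) - D lamStar (lam (k + 1)))
    (hmono : ∀ k, d (lam k) ≤ d (lam (k + 1)))
    (hbdd : ∀ k, d (lam k) ≤ d lamStar) :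
    Tendsto (fun k => d (lam k)) atTop (nhds (d lamStar)) := by
  have hmono' : Monotone fun k => d (lam k) :=
    monotone_nat_of_le_succ hmono
  have hbdd' : BddAbove (Set.range fun k => d (lam k)) :=
    ⟨d lamStar, by rintro x ⟨k, rfl⟩; exact hbdd k⟩
  set L := ⨆ k, d (lam k) with hLdef
  have hL : Tendsto (fun k => d (lam k)) atTop (nhds L) :=
    tendsto_atTop_ciSup hmono' hbdd'
  have hle : ∀ k, d (lam k) ≤ L := fun k => le_ciSup hbdd' k
  have hLle : L ≤ d lamStar := ciSup_le hbdd
  rcases eq_or_lt_of_le hLle with heq | hlt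
  · rwa [heq] at hL
  · exfalso
    set ε := d lamStar - L with hε
    have hεpos : 0 < ε := by simp [hε]; linarith
    -- partial sums bounded
    have key : ∀ T, ε * ∑ k ∈ Finset.range T, η k ≤ D lamStar (lam 0) := by
      intro T
      have h1 : ∀ k, η k * ε ≤ D lamStar (lam k) - D lamStar (lam (k + 1)) := by
        intro k
        have : ε ≤ d lamStar - d (lam (k + 1)) := by
          have := hle (k + 1); linarith
        calc η k * ε ≤ η k * (d lamStar - d (lam (k + 1))) := by
              exact mul_le_mul_of_nonneg_left this (hη k).le
          _ ≤ _ := hstep k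
      calc ε * ∑ k ∈ Finset.range T, η k
          = ∑ k ∈ Finset.range T, η k * ε := by
            rw [Finset.mul_sum]; simp [mul_comm]
        _ ≤ ∑ k ∈ Finset.range T, (D lamStar (lam k) - D lamStar (lam (k + 1))) :=
            Finset.sum_le_sum fun k _ => h1 k
        _ = D lamStar (lam 0) - D lamStar (lam T) := Finset.sum_range_sub' _ _
        _ ≤ D lamStar (lam 0) := by have := hDnn lamStar (lam T); linarith
    have hbound : ∀ T, ∑ k ∈ Finset.range T, η k ≤ D lamStar (lam 0) / ε := fun T =>
      (le_div_iff₀ hεpos).mpr (by linarith [key T, mul_comm ε (∑ k ∈ Finset.range T, η k)])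
    obtain ⟨T, hT⟩ := (hdiv.eventually_gt_atTop (D lamStar (lam 0) / ε)).exists
    exact absurd (hbound T) (not_le.mpr hT)
end

section
/- Define θ_k > 0 by the recursion η_k/θ_k² = η_{k+1}/θ_{k+1}² - η_{k+1}/θ_{k+1} with θ₀ = 1 and η_k > 0. Then for all k, √η_k / (∑_{i=0}^k √η_i) ≤ θ_k ≤ 2√η_k / (∑_{i=0}^k √η_i). -/
/-!
Put `a k = √η k / θ k`. The recursion becomes `a (k+1)² = a k² + √η (k+1) · a (k+1)`, whose positive
root is `a (k+1) = √η (k+1) / 2 + √(a k² + η (k+1) / 4)`, so `a` grows by between `√η (k+1) / 2`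
and `√η (k+1)` at each step. Starting from `a 0 = √η 0`, this pins `a k` between half the partial
sum `∑_{i ≤ k} √η i` and the partial sum itself, which is the claim since `θ k = √η k / a k`.
-/

open Finset

section QuadraticStep

variable {a b q : ℝ}

theorem add_half_le_of_sq_eq_sq_add_mul (hb : 0 < b) (hq : 0 ≤ q) (h : b ^ 2 = a ^ 2 + q * b) :
    a + q / 2 ≤ b := by
  have hqb : q ≤ b := by nlinarith [sq_nonneg a]
  -- `(b - q/2)² = a² + (q/2)² ≥ a²` with `b - q/2 ≥ 0`
  nlinarith [sq_nonneg (b - q / 2 - a)]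

theorem le_add_of_sq_eq_sq_add_mul (ha : 0 ≤ a) (hq : 0 ≤ q) (h : b ^ 2 = a ^ 2 + q * b) :
    b ≤ a + q := by
  nlinarith [mul_nonneg ha hq]

end QuadraticStep

theorem half_sum_le_and_le_sum_of_sq_succ {q a : ℕ → ℝ} (hq : ∀ k, 0 ≤ q k) (ha : ∀ k, 0 < a k)
    (h0 : a 0 = q 0) (hsucc : ∀ k, a (k + 1) ^ 2 = a k ^ 2 + q (k + 1) * a (k + 1)) (k : ℕ) :
    (∑ i ∈ range (k + 1), q i) / 2 ≤ a k ∧ a k ≤ ∑ i ∈ range (k + 1), q i := by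
  induction k with
  | zero => simp only [zero_add, range_one, sum_singleton, h0]; constructor <;> linarith [hq 0]
  | succ k ih =>
    have hlow := add_half_le_of_sq_eq_sq_add_mul (ha (k + 1)) (hq (k + 1)) (hsucc k)
    have hup := le_add_of_sq_eq_sq_add_mul (ha k).le (hq (k + 1)) (hsucc k)
    rw [sum_range_succ]
    constructor <;> linarith [ih.1, ih.2]

theorem theta_two_sided_bound (η θ : ℕ → ℝ)
    (hη : ∀ k, 0 < η k) (hθpos : ∀ k, 0 < θ k) (hθ0 : θ 0 = 1)
    (hrec : ∀ k, η k / θ k ^ 2 = η (k + 1) / θ (k + 1) ^ 2 - η (k + 1) / θ (k + 1)) :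
    ∀ k, Real.sqrt (η k) / (∑ i ∈ Finset.range (k + 1), Real.sqrt (η i)) ≤ θ k ∧
      θ k ≤ 2 * Real.sqrt (η k) / (∑ i ∈ Finset.range (k + 1), Real.sqrt (η i)) := by
  set q : ℕ → ℝ := fun k => Real.sqrt (η k)
  have hq : ∀ k, 0 < q k := fun k => Real.sqrt_pos.mpr (hη k)
  have hη_eq : ∀ k, η k = q k ^ 2 := fun k => (Real.sq_sqrt (hη k).le).symm
  set a : ℕ → ℝ := fun k => q k / θ k
  have ha : ∀ k, 0 < a k := fun k => div_pos (hq k) (hθpos k)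
  have hsucc : ∀ k, a (k + 1) ^ 2 = a k ^ 2 + q (k + 1) * a (k + 1) := fun k => by
    have := hrec k
    simp only [a, hη_eq] at this ⊢
    rw [div_pow, div_pow, this]
    ring
  intro k
  obtain ⟨hlow, hup⟩ :=
    half_sum_le_and_le_sum_of_sq_succ (fun k => (hq k).le) ha (by simp [a, hθ0]) hsucc k
  have hθ : θ k = q k / a k := (div_div_cancel₀ (hq k).ne').symm
  have hS : 0 < ∑ i ∈ range (k + 1), q i := (ha k).trans_le hup
  rw [hθ]
  refine ⟨div_le_div_of_nonneg_left (hq k).le (ha k) hup, ?_⟩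
  calc q k / a k ≤ q k / ((∑ i ∈ range (k + 1), q i) / 2) :=
        div_le_div_of_nonneg_left (hq k).le (by positivity) hlow
    _ = 2 * q k / ∑ i ∈ range (k + 1), q i := by field_simp
end

section
/- Let t_k satisfy t₀ = 1 and t_{k+1} = (1 + √(1 + 4(η_k/η_{k+1})t_k²))/2 with η_k > 0. Then for each k: 1/2 + √(η_k/η_{k+1})·t_k ≤ t_{k+1} ≤ 1/2 + (1 + 2√(η_k/η_{k+1})·t_k)/2, and hence (1/2)√η_{k+1} ≤ √η_{k+1}·t_{k+1} - √η_k·t_k ≤ √η_{k+1}. -/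
/-!
Put `s = √(η k / η (k + 1)) * t k ≥ 0`, so that `t (k + 1) = (1 + √(1 + (2 s)²)) / 2`.
Since `2 s ≤ √(1 + (2 s)²) ≤ 1 + 2 s`, the increment `t (k + 1) - s` lies in `[1/2, 1]`.
Multiplying by `√(η (k + 1))` and using `√(η (k + 1)) * s = √(η k) * t k` gives the second pair
of bounds.
-/

open Real

lemma le_sqrt_one_add_sq (x : ℝ) : x ≤ √(1 + x ^ 2) :=
  le_sqrt_of_sq_le (by linarith)

lemma sqrt_one_add_sq_le {x : ℝ} (hx : 0 ≤ x) : √(1 + x ^ 2) ≤ 1 + x :=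
  (sqrt_le_left (by linarith)).2 (by nlinarith)

lemma one_add_four_mul_mul_sq {r : ℝ} (hr : 0 ≤ r) (x : ℝ) :
    1 + 4 * r * x ^ 2 = 1 + (2 * (√r * x)) ^ 2 := by
  rw [mul_pow, mul_pow, sq_sqrt hr]
  ring

lemma half_add_le_half_one_add_sqrt (r x : ℝ) (hr : 0 ≤ r) :
    1 / 2 + √r * x ≤ (1 + √(1 + 4 * r * x ^ 2)) / 2 := by
  have := le_sqrt_one_add_sq (2 * (√r * x))
  rw [one_add_four_mul_mul_sq hr]
  linarith

lemma half_one_add_sqrt_le {r x : ℝ} (hr : 0 ≤ r) (hx : 0 ≤ x) :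
    (1 + √(1 + 4 * r * x ^ 2)) / 2 ≤ 1 / 2 + (1 + 2 * √r * x) / 2 := by
  have := sqrt_one_add_sq_le (by positivity : 0 ≤ 2 * (√r * x))
  rw [one_add_four_mul_mul_sq hr]
  linarith

lemma sqrt_mul_sqrt_div_mul (a : ℝ) {b : ℝ} (hb : 0 < b) (x : ℝ) :
    √b * (√(a / b) * x) = √a * x := by
  rw [sqrt_div' a hb.le, ← mul_assoc, mul_div_cancel₀ _ (sqrt_pos.2 hb).ne']

theorem t_recursion_bounds (η t : ℕ → ℝ)
    (hη : ∀ k, 0 < η k) (ht0 : t 0 = 1)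
    (hrec : ∀ k, t (k + 1) = (1 + Real.sqrt (1 + 4 * (η k / η (k + 1)) * t k ^ 2)) / 2) :
    ∀ k,
      (1 / 2 + Real.sqrt (η k / η (k + 1)) * t k ≤ t (k + 1) ∧
        t (k + 1) ≤ 1 / 2 + (1 + 2 * Real.sqrt (η k / η (k + 1)) * t k) / 2) ∧
      (1 / 2 * Real.sqrt (η (k + 1)) ≤
          Real.sqrt (η (k + 1)) * t (k + 1) - Real.sqrt (η k) * t k ∧
        Real.sqrt (η (k + 1)) * t (k + 1) - Real.sqrt (η k) * t k ≤ Real.sqrt (η (k + 1))) := by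
  have ht_nonneg : ∀ k, 0 ≤ t k
    | 0 => by simp [ht0]
    | k + 1 => by rw [hrec k]; positivity
  intro k
  have hr : 0 ≤ η k / η (k + 1) := (div_pos (hη k) (hη (k + 1))).le
  have lower := (hrec k).symm ▸ half_add_le_half_one_add_sqrt _ (t k) hr
  have upper := (hrec k).symm ▸ half_one_add_sqrt_le hr (ht_nonneg k)
  have hscale := sqrt_mul_sqrt_div_mul (η k) (hη (k + 1)) (t k)
  have hc := sqrt_nonneg (η (k + 1))
  refine ⟨⟨lower, upper⟩, ?_, ?_⟩
  · linarith [mul_le_mul_of_nonneg_left lower hc]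
  · linarith [mul_le_mul_of_nonneg_left upper hc]
end

section
/- Define θ_k ∈ (0,1) recursively by Gθ_k²/η_k = (1-θ_k)·A_k and A_{k+1} = (1-θ_k)·A_k, with A₀ = A > 0, G > 0, η_k > 0. Then for all T ≥ 1: 1/(1 + √(A/G)·∑_{k=0}^{T-1}√η_k)² ≤ ∏_{k=0}^{T-1}(1-θ_k) ≤ 1/(1 + (√(A/G)/2)·∑_{k=0}^{T-1}√η_k)². -/
/-!
With `b k = √(a / A k)` we have `b 0 = 1` and `∏_{k<T} (1 - θ k) = A T / a = 1 / b T ^ 2`.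
Writing `s = √(1 - θ k)`, the recursion says `θ k = √(η k / G) · s · √(A k)`, and since
`θ k = (1 - s)(1 + s)` this gives the exact increment
`b (k+1) - b k = √(a / G) · √(η k) / (1 + s)`. As `s ∈ (0, 1)`, each increment lies between
half of `√(a / G) · √(η k)` and all of it; summing and inverting the squares gives both bounds.
-/

open Finset Real

theorem sqrt_div_sub_sqrt_div_eq_of_guler_rec {a x G η θ : ℝ} (ha : 0 ≤ a) (hx : 0 < x) (hG : 0 < G)
    (hη : 0 < η) (hθ : θ ∈ Set.Ioo (0 : ℝ) 1) (hrec : G * θ ^ 2 / η = (1 - θ) * x) :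
    √(a / ((1 - θ) * x)) - √(a / x) = √(a / G) * √η / (1 + √(1 - θ)) := by
  obtain ⟨hθ0, hθ1⟩ := hθ
  set s := √(1 - θ) with hs
  have hs2 : s ^ 2 = 1 - θ := sq_sqrt (by linarith)
  have hθ_sq : (θ * √G) ^ 2 = (√η * s * √x) ^ 2 := by
    simp only [mul_pow, sq_sqrt hG.le, sq_sqrt hη.le, sq_sqrt hx.le, hs2]
    field_simp at hrec
    linarith
  have hθ_eq : θ * √G = √η * s * √x :=
    (sq_eq_sq₀ (by positivity) (by positivity)).mp hθ_sq
  rw [sqrt_div ha, sqrt_div ha, sqrt_div ha, sqrt_mul (by linarith), ← hs]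
  have : 0 < s := sqrt_pos.mpr (by linarith)
  have : 0 < √x := sqrt_pos.mpr hx
  have : 0 < √G := sqrt_pos.mpr hG
  field_simp
  linear_combination √a * hθ_eq - √a * √G * hs2

theorem div_one_add_sqrt_mem_Icc {c q : ℝ} (hc : 0 ≤ c) (hq : q ≤ 1) :
    c / (1 + √q) ∈ Set.Icc (c / 2) c := by
  have hq1 : √q ≤ 1 := sqrt_le_one.mpr hq
  constructor
  · gcongr
    linarith
  · exact div_le_self hc (by linarith [sqrt_nonneg q])

section Guler

variable {a G : ℝ} {η θ A : ℕ → ℝ}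

theorem guler_seq_pos (ha : 0 < a) (hA0 : A 0 = a) (hθ : ∀ k, θ k ∈ Set.Ioo (0 : ℝ) 1)
    (hA : ∀ k, A (k + 1) = (1 - θ k) * A k) (n : ℕ) : 0 < A n := by
  induction n with
  | zero => rwa [hA0]
  | succ n ih => rw [hA n]; exact mul_pos (sub_pos.mpr (hθ n).2) ih

theorem guler_prod_eq_div (ha : a ≠ 0) (hA0 : A 0 = a) (hA : ∀ k, A (k + 1) = (1 - θ k) * A k)
    (n : ℕ) : ∏ k ∈ range n, (1 - θ k) = A n / a :=
  prod_range_induction _ (fun n => A n / a) (by simp [hA0, ha]) n fun k _ => by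
    rw [hA k]; ring

theorem guler_sqrt_div_eq_one_add_sum (ha : 0 < a) (hG : 0 < G) (hη : ∀ k, 0 < η k)
    (hA0 : A 0 = a) (hθ : ∀ k, θ k ∈ Set.Ioo (0 : ℝ) 1) (hrec : ∀ k, G * θ k ^ 2 / η k = (1 - θ k) * A k)
    (hA : ∀ k, A (k + 1) = (1 - θ k) * A k) (n : ℕ) :
    √(a / A n) = 1 + ∑ k ∈ range n, √(a / G) * √(η k) / (1 + √(1 - θ k)) := by
  have hstep k : √(a / A (k + 1)) - √(a / A k) = √(a / G) * √(η k) / (1 + √(1 - θ k)) := by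
    rw [hA k]
    exact sqrt_div_sub_sqrt_div_eq_of_guler_rec ha.le (guler_seq_pos ha hA0 hθ hA k) hG (hη k)
      (hθ k) (hrec k)
  simp_rw [← hstep, sum_range_sub (fun k => √(a / A k)), hA0, div_self ha.ne', sqrt_one]
  ring

end Guler

theorem guler_product_bound_general (a G : ℝ) (ha : 0 < a) (hG : 0 < G)
    (η θ A : ℕ → ℝ) (hη : ∀ k, 0 < η k) (hA0 : A 0 = a)
    (hθ : ∀ k, θ k ∈ Set.Ioo (0 : ℝ) 1)
    (hrec : ∀ k, G * θ k ^ 2 / η k = (1 - θ k) * A k)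
    (hA : ∀ k, A (k + 1) = (1 - θ k) * A k)
    (T : ℕ) :
    1 / (1 + Real.sqrt (a / G) * ∑ k ∈ Finset.range T, Real.sqrt (η k)) ^ 2
        ≤ ∏ k ∈ Finset.range T, (1 - θ k) ∧
      ∏ k ∈ Finset.range T, (1 - θ k)
        ≤ 1 / (1 + Real.sqrt (a / G) / 2 * ∑ k ∈ Finset.range T, Real.sqrt (η k)) ^ 2 := by
  have hdiv_pos : 0 < a / A T := div_pos ha (guler_seq_pos ha hA0 hθ hA T)
  have hprod : ∏ k ∈ range T, (1 - θ k) = 1 / √(a / A T) ^ 2 := by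
    rw [guler_prod_eq_div ha.ne' hA0 hA, sq_sqrt hdiv_pos.le, one_div_div]
  have hterm k : √(a / G) * √(η k) / (1 + √(1 - θ k)) ∈
      Set.Icc (√(a / G) * √(η k) / 2) (√(a / G) * √(η k)) :=
    div_one_add_sqrt_mem_Icc (by positivity) (by linarith [(hθ k).1])
  have hb := guler_sqrt_div_eq_one_add_sum ha hG hη hA0 hθ hrec hA T
  have hlow : √(a / G) / 2 * ∑ k ∈ range T, √(η k) ≤ √(a / A T) - 1 := by
    rw [hb, mul_sum, add_sub_cancel_left]
    exact sum_le_sum fun k _ => by linarith [(hterm k).1]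
  have hup : √(a / A T) - 1 ≤ √(a / G) * ∑ k ∈ range T, √(η k) := by
    rw [hb, mul_sum, add_sub_cancel_left]
    exact sum_le_sum fun k _ => (hterm k).2
  have hb_pos : 0 < √(a / A T) := sqrt_pos.mpr hdiv_pos
  rw [hprod]
  constructor <;> gcongr <;> linarith

theorem guler_product_bound (a G : ℝ) (ha : 0 < a) (hG : 0 < G)
    (η θ A : ℕ → ℝ) (hη : ∀ k, 0 < η k) (hA0 : A 0 = a)
    (hθ : ∀ k, θ k ∈ Set.Ioo (0 : ℝ) 1)
    (hrec : ∀ k, G * θ k ^ 2 / η k = (1 - θ k) * A k)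
    (hA : ∀ k, A (k + 1) = (1 - θ k) * A k)
    (T : ℕ) (hT : 1 ≤ T) :
    1 / (1 + Real.sqrt (a / G) * ∑ k ∈ Finset.range T, Real.sqrt (η k)) ^ 2
        ≤ ∏ k ∈ Finset.range T, (1 - θ k) ∧
      ∏ k ∈ Finset.range T, (1 - θ k)
        ≤ 1 / (1 + Real.sqrt (a / G) / 2 * ∑ k ∈ Finset.range T, Real.sqrt (η k)) ^ 2 :=
  guler_product_bound_general a G ha hG η θ A hη hA0 hθ hrec hA T
end

section
/- Consider the LP min{cᵀx : Ax = b} with A ∈ ℝ^{m×n}, rank(A) = n, m > n, and b ∈ range(A). For the accelerated ALM iteration x_{k+1} = (AᵀA)^{-1}(Aᵀb - (1/η)(Aᵀy_k + c)), the residual z_k := Aᵀy_k + c satisfies z_{k+1} = -(t_k/t_{k+1})·z_k, hence z_k = (-1)^k·(t₀/t_k)·c, where y_{k+1} = λ_{k+1} + ((t_k-1)/t_{k+1})(λ_{k+1}-λ_k) + (t_k/t_{k+1})(λ_{k+1}-y_k), λ_{k+1} = y_k + η(Ax_{k+1}-b), and z₀ = c (i.e., y₀ = 0). -/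
/-! The primal step solves the augmented-Lagrangian subproblem exactly, so every new multiplier
`λ_{k+1}` is dual feasible: `Aᵀ λ_{k+1} = -c`. Applying `Aᵀ` to the extrapolation defining
`y_{k+1}`, the momentum term `λ_{k+1} - λ_k` is then annihilated (at `k = 0` its coefficient
`t₀ - 1` vanishes instead), and what remains is `z_{k+1} = -(t_k / t_{k+1}) z_k`. Since `t_k > 0`,
the recursion telescopes from `z₀ = c`. -/

open Matrix

theorem Matrix.isUnit_of_rank_eq_card {K n : Type*} [Field K] [Fintype n] [DecidableEq n]
    {M : Matrix n n K} (h : M.rank = Fintype.card n) : IsUnit M := by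
  rw [← mulVec_surjective_iff_isUnit]
  have hrange : LinearMap.range M.mulVecLin = ⊤ :=
    Submodule.eq_top_of_finrank_eq (by rw [← rank, h, Module.finrank_fintype_fun_eq_card])
  exact LinearMap.range_eq_top.mp hrange

theorem Matrix.transpose_mulVec_multiplier_update {K m n : Type*} [Field K] [Fintype m]
    [Fintype n] [DecidableEq n] {A : Matrix m n K} (hA : IsUnit (Aᵀ * A)) {η : K}
    (hη : η ≠ 0) (b y : m → K) (c : n → K) :
    Aᵀ *ᵥ (y + η • (A *ᵥ ((Aᵀ * A)⁻¹ *ᵥ (Aᵀ *ᵥ b - (1 / η) • (Aᵀ *ᵥ y + c))) - b)) = -c := by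
  have hinv : Aᵀ * A * (Aᵀ * A)⁻¹ = 1 := mul_nonsing_inv _ ((isUnit_iff_isUnit_det _).mp hA)
  rw [mulVec_add, mulVec_smul, mulVec_sub, mulVec_mulVec, mulVec_mulVec, hinv, one_mulVec,
    smul_sub, smul_sub, smul_smul, mul_one_div_cancel hη, one_smul]
  abel

theorem LinearMap.map_extrapolate_add {R M N : Type*} [CommRing R] [AddCommGroup M] [Module R M]
    [AddCommGroup N] [Module R N] (f : M →ₗ[R] N) {c : N} {lam' lam y : M} {α β : R}
    (hlam' : f lam' = -c) (hlam : α • (f lam + c) = 0) :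
    f (lam' + α • (lam' - lam) + β • (lam' - y)) + c = (-β) • (f y + c) := by
  simp only [map_add, map_smul, map_sub, hlam']
  linear_combination (norm := module) -hlam

theorem forall_pos_of_succ_eq_one_add_sqrt {t : ℕ → ℝ} (ht0 : 0 < t 0)
    (htrec : ∀ k, t (k + 1) = (1 + √(1 + 4 * t k ^ 2)) / 2) : ∀ k, 0 < t k
  | 0 => ht0
  | k + 1 => by rw [htrec k]; positivity

theorem eq_neg_one_pow_mul_div_smul_of_succ_eq {K V : Type*} [Field K] [AddCommGroup V]
    [Module K V] {t : ℕ → K} (ht : ∀ k, t k ≠ 0) {z : ℕ → V}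
    (hz : ∀ k, z (k + 1) = (-(t k / t (k + 1))) • z k) :
    ∀ k, z k = ((-1 : K) ^ k * (t 0 / t k)) • z 0
  | 0 => by rw [pow_zero, one_mul, div_self (ht 0), one_smul]
  | k + 1 => by
    rw [hz k, eq_neg_one_pow_mul_div_smul_of_succ_eq ht hz k, smul_smul]
    congr 1
    field_simp [ht k]
    ring

theorem guler2nd_residual_recursion_general {m n : ℕ}
    (A : Matrix (Fin m) (Fin n) ℝ) (hrank : A.rank = n)
    (b : Fin m → ℝ)
    (c : Fin n → ℝ) (η : ℝ) (hη : 0 < η)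
    (t : ℕ → ℝ) (ht0 : t 0 = 1)
    (htrec : ∀ k, t (k + 1) = (1 + Real.sqrt (1 + 4 * t k ^ 2)) / 2)
    (x : ℕ → Fin n → ℝ) (y lam : ℕ → Fin m → ℝ) (z : ℕ → Fin n → ℝ)
    (hy0 : y 0 = 0)
    (hx : ∀ k, x (k + 1) =
      (Aᵀ * A)⁻¹.mulVec (Aᵀ.mulVec b - (1 / η) • (Aᵀ.mulVec (y k) + c)))
    (hlam : ∀ k, lam (k + 1) = y k + η • (A.mulVec (x (k + 1)) - b))
    (hy : ∀ k, y (k + 1) = lam (k + 1) + ((t k - 1) / t (k + 1)) • (lam (k + 1) - lam k)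
      + (t k / t (k + 1)) • (lam (k + 1) - y k))
    (hz : ∀ k, z k = Aᵀ.mulVec (y k) + c) :
    (∀ k, z (k + 1) = (-(t k / t (k + 1))) • z k) ∧
      ∀ k, z k = ((-1 : ℝ) ^ k * (t 0 / t k)) • c := by
  have hunit : IsUnit (Aᵀ * A) :=
    isUnit_of_rank_eq_card (by rw [rank_transpose_mul_self, hrank, Fintype.card_fin])
  have hfeasible : ∀ k, Aᵀ *ᵥ lam (k + 1) = -c := fun k => by
    rw [hlam k, hx k]
    exact transpose_mulVec_multiplier_update hunit hη.ne' b (y k) c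
  have hmomentum : ∀ k, ((t k - 1) / t (k + 1)) • (Aᵀ *ᵥ lam k + c) = 0
    | 0 => by rw [ht0, sub_self, zero_div, zero_smul]
    | k + 1 => by rw [hfeasible k, neg_add_cancel, smul_zero]
  have hrec : ∀ k, z (k + 1) = (-(t k / t (k + 1))) • z k := fun k => by
    rw [hz, hz, hy]
    exact Aᵀ.mulVecLin.map_extrapolate_add (hfeasible k) (hmomentum k)
  have htpos := forall_pos_of_succ_eq_one_add_sqrt (ht0 ▸ one_pos) htrec
  refine ⟨hrec, fun k => ?_⟩
  rw [eq_neg_one_pow_mul_div_smul_of_succ_eq (fun k => (htpos k).ne') hrec k, hz, hy0,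
    mulVec_zero, zero_add]

theorem guler2nd_residual_recursion {m n : ℕ} (hmn : n < m)
    (A : Matrix (Fin m) (Fin n) ℝ) (hrank : A.rank = n)
    (b : Fin m → ℝ) (hb : ∃ x₀ : Fin n → ℝ, A.mulVec x₀ = b)
    (c : Fin n → ℝ) (η : ℝ) (hη : 0 < η)
    (t : ℕ → ℝ) (ht0 : t 0 = 1)
    (htrec : ∀ k, t (k + 1) = (1 + Real.sqrt (1 + 4 * t k ^ 2)) / 2)
    (x : ℕ → Fin n → ℝ) (y lam : ℕ → Fin m → ℝ) (z : ℕ → Fin n → ℝ)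
    (hy0 : y 0 = 0)
    (hx : ∀ k, x (k + 1) =
      (Aᵀ * A)⁻¹.mulVec (Aᵀ.mulVec b - (1 / η) • (Aᵀ.mulVec (y k) + c)))
    (hlam : ∀ k, lam (k + 1) = y k + η • (A.mulVec (x (k + 1)) - b))
    (hy : ∀ k, y (k + 1) = lam (k + 1) + ((t k - 1) / t (k + 1)) • (lam (k + 1) - lam k)
      + (t k / t (k + 1)) • (lam (k + 1) - y k))
    (hz : ∀ k, z k = Aᵀ.mulVec (y k) + c) :
    (∀ k, z (k + 1) = (-(t k / t (k + 1))) • z k) ∧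
      ∀ k, z k = ((-1 : ℝ) ^ k * (t 0 / t k)) • c :=
  guler2nd_residual_recursion_general A hrank b c η hη t ht0 htrec x y lam z hy0 hx hlam hy hz
end

section
/- In the counter-example LP with x_{k+1} = x* - (1/η)(AᵀA)^{-1}z_k and z_k = (-1)^k(t₀/t_k)c, the primal optimality gap and feasibility violation satisfy |cᵀ(x* - x_T)| = (cᵀ(AᵀA)^{-1}c/η)·(t₀/t_{T-1}) and ‖Ax_T - b‖ = (‖A(AᵀA)^{-1}c‖/η)·(t₀/t_{T-1}); since (T+1)/2 ≤ t_T ≤ T+1, both gaps are of order Θ(1/T). -/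
/-!
Full column rank makes `AᵀA` invertible, so `x* = (AᵀA)⁻¹Aᵀb` solves `Ax = b` exactly. The
iteration then gives `x* - x_{k+1} = s_k (AᵀA)⁻¹c` and `Ax_{k+1} - b = -s_k A(AᵀA)⁻¹c` with
`s_k = (-1)^k t₀ / (η t_k)`. Taking absolute values uses `t_k > 0` and `cᵀ(AᵀA)⁻¹c ≥ 0`, the
latter because `(AᵀA)⁻¹` is positive semidefinite.
-/

open Matrix

namespace Matrix

variable {m n R : Type*} [Fintype m] [Fintype n] [DecidableEq n]

theorem isUnit_of_rank_eq_card_s18 [Field R] {M : Matrix n n R} (h : M.rank = Fintype.card n) :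
    IsUnit M := by
  rw [← mulVec_surjective_iff_isUnit]
  exact LinearMap.range_eq_top.mp <|
    Submodule.eq_top_of_finrank_eq (h.trans (Module.finrank_fintype_fun_eq_card R).symm)

theorem isUnit_transpose_mul_self_of_rank_eq_card [Field R] [LinearOrder R]
    [IsStrictOrderedRing R] {A : Matrix m n R} (h : A.rank = Fintype.card n) :
    IsUnit (Aᵀ * A) :=
  isUnit_of_rank_eq_card_s18 ((rank_transpose_mul_self A).trans h)

theorem inv_transpose_mul_self_mulVec_transpose_mulVec [CommRing R] {A : Matrix m n R}
    (hA : IsUnit (Aᵀ * A)) (x : n → R) : (Aᵀ * A)⁻¹ *ᵥ (Aᵀ *ᵥ (A *ᵥ x)) = x := by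
  rw [mulVec_mulVec x, mulVec_mulVec, nonsing_inv_mul _ ((isUnit_iff_isUnit_det _).mp hA),
    one_mulVec]

theorem dotProduct_inv_transpose_mul_self_mulVec_nonneg (A : Matrix m n ℝ) (c : n → ℝ) :
    0 ≤ c ⬝ᵥ (Aᵀ * A)⁻¹ *ᵥ c := by
  simpa using (posSemidef_conjTranspose_mul_self A).inv.dotProduct_mulVec_nonneg c

end Matrix

theorem pos_of_succ_eq_one_add_sqrt {t : ℕ → ℝ} (ht0 : 0 < t 0)
    (htrec : ∀ k, t (k + 1) = (1 + Real.sqrt (1 + 4 * t k ^ 2)) / 2) (k : ℕ) : 0 < t k := by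
  cases k with
  | zero => exact ht0
  | succ k => rw [htrec k]; positivity

theorem guler2nd_primal_gap_exact_general {m n : ℕ}
    (A : Matrix (Fin m) (Fin n) ℝ) (hrank : A.rank = n)
    (b : Fin m → ℝ) (hb : ∃ x₀ : Fin n → ℝ, A.mulVec x₀ = b)
    (c : Fin n → ℝ) (η : ℝ) (hη : 0 < η)
    (t : ℕ → ℝ) (ht0 : t 0 = 1)
    (htrec : ∀ k, t (k + 1) = (1 + Real.sqrt (1 + 4 * t k ^ 2)) / 2)
    (xs : Fin n → ℝ) (hxs : xs = (Aᵀ * A)⁻¹.mulVec (Aᵀ.mulVec b))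
    (z : ℕ → Fin n → ℝ) (hzc : ∀ k, z k = ((-1 : ℝ) ^ k * (t 0 / t k)) • c)
    (x : ℕ → Fin n → ℝ)
    (hx : ∀ k, x (k + 1) = xs - (1 / η) • (Aᵀ * A)⁻¹.mulVec (z k))
    (T : ℕ) (hT : 1 ≤ T) :
    |c ⬝ᵥ (xs - x T)| = c ⬝ᵥ (Aᵀ * A)⁻¹.mulVec c / η * (t 0 / t (T - 1)) ∧
      ‖A.mulVec (x T) - b‖ = ‖A.mulVec ((Aᵀ * A)⁻¹.mulVec c)‖ / η * (t 0 / t (T - 1)) := by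
  obtain ⟨k, rfl⟩ : ∃ k, T = k + 1 := ⟨T - 1, by omega⟩
  have htpos := pos_of_succ_eq_one_add_sqrt (ht0 ▸ one_pos) htrec
  have hAxs : A *ᵥ xs = b := by
    obtain ⟨x₀, rfl⟩ := hb
    rw [hxs, inv_transpose_mul_self_mulVec_transpose_mulVec
      (isUnit_transpose_mul_self_of_rank_eq_card (hrank.trans (Fintype.card_fin n).symm))]
  set s := (-1 : ℝ) ^ k * (t 0 / t k) / η
  have habs : |s| = t 0 / t k / η := by
    rw [abs_div, abs_mul, abs_pow, abs_neg, abs_one, one_pow, one_mul,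
      abs_of_pos (div_pos (htpos 0) (htpos k)), abs_of_pos hη]
  have hgap : xs - x (k + 1) = s • (Aᵀ * A)⁻¹ *ᵥ c := by
    rw [hx k, hzc k, mulVec_smul, sub_sub_cancel, smul_smul]
    congr 1
    ring
  have hres : A *ᵥ x (k + 1) - b = (-s) • A *ᵥ (Aᵀ * A)⁻¹ *ᵥ c := by
    rw [← hAxs, ← mulVec_sub, ← neg_sub, hgap, mulVec_neg, mulVec_smul, neg_smul]
  simp only [Nat.add_sub_cancel]
  constructor
  · rw [hgap, dotProduct_smul, smul_eq_mul, abs_mul, habs,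
      abs_of_nonneg (dotProduct_inv_transpose_mul_self_mulVec_nonneg A c)]
    ring
  · rw [hres, norm_smul, Real.norm_eq_abs, abs_neg, habs]
    ring

theorem guler2nd_primal_gap_exact {m n : ℕ} (hmn : n < m)
    (A : Matrix (Fin m) (Fin n) ℝ) (hrank : A.rank = n)
    (b : Fin m → ℝ) (hb : ∃ x₀ : Fin n → ℝ, A.mulVec x₀ = b)
    (c : Fin n → ℝ) (η : ℝ) (hη : 0 < η)
    (t : ℕ → ℝ) (ht0 : t 0 = 1)
    (htrec : ∀ k, t (k + 1) = (1 + Real.sqrt (1 + 4 * t k ^ 2)) / 2)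
    (xs : Fin n → ℝ) (hxs : xs = (Aᵀ * A)⁻¹.mulVec (Aᵀ.mulVec b))
    (z : ℕ → Fin n → ℝ) (hzc : ∀ k, z k = ((-1 : ℝ) ^ k * (t 0 / t k)) • c)
    (x : ℕ → Fin n → ℝ)
    (hx : ∀ k, x (k + 1) = xs - (1 / η) • (Aᵀ * A)⁻¹.mulVec (z k))
    (T : ℕ) (hT : 1 ≤ T) :
    |c ⬝ᵥ (xs - x T)| = c ⬝ᵥ (Aᵀ * A)⁻¹.mulVec c / η * (t 0 / t (T - 1)) ∧
      ‖A.mulVec (x T) - b‖ = ‖A.mulVec ((Aᵀ * A)⁻¹.mulVec c)‖ / η * (t 0 / t (T - 1)) :=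
  guler2nd_primal_gap_exact_general A hrank b hb c η hη t ht0 htrec xs hxs z hzc x hx T hT
end
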